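/- arXiv:2201.01646 — 8 statements merged into one kernel-verified Lean document; each statement's English description precedes it below -/
import Mathlib

section
/- A reversible reaction network with reaction energies (X, R, g) is thermodynamic if and only if it contains no perpetuum mobile (i.e., no flow v > 0 with S v = 0 and ⟨g, v⟩ ≠ 0). -/
/-!
Reversibility makes `eᵣ + e_{r'}` a nonnegative steady state for every reaction `r` with reverse
`r'`. Adding `|vᵣ|` copies of each of them to a steady state `v` gives a nonnegative steady state,
so every steady state is a difference of two nonnegative ones. A linear functional that vanishes on
nonnegative steady states, such as `⟨g, ·⟩` in the absence of a perpetuum mobile, therefore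
vanishes on all of `ker S`.
-/

open Matrix

namespace Matrix

variable {X R 𝕜 : Type*} [Fintype R]

theorem mulVec_single_add_single_eq_zero [Ring 𝕜] [DecidableEq R] (S : Matrix X R 𝕜) {r r' : R}
    (h : ∀ x, S x r' = -S x r) : S *ᵥ (Pi.single r 1 + Pi.single r' 1) = 0 := by
  ext x
  simp [mulVec_add, h]

theorem exists_nonneg_sub_of_mulVec_eq_zero [CommRing 𝕜] [LinearOrder 𝕜] [IsStrictOrderedRing 𝕜]
    (S : Matrix X R 𝕜) (hrev : ∀ r, ∃ r', ∀ x, S x r' = -S x r) {v : R → 𝕜} (hv : S *ᵥ v = 0) :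
    ∃ w u : R → 𝕜, 0 ≤ w ∧ 0 ≤ u ∧ S *ᵥ w = 0 ∧ S *ᵥ u = 0 ∧ v = w - u := by
  classical
  choose ρ hρ using hrev
  set u : R → 𝕜 := ∑ r, |v r| • (Pi.single r 1 + Pi.single (ρ r) 1)
  have hSu : S *ᵥ u = 0 := by
    simp only [u, mulVec_sum, mulVec_smul, mulVec_single_add_single_eq_zero S (hρ _), smul_zero,
      Finset.sum_const_zero]
  have habs_le : (fun r => |v r|) ≤ u :=
    calc (fun r => |v r|) = ∑ r, |v r| • Pi.single r 1 := pi_eq_sum_univ' _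
      _ ≤ u := Finset.sum_le_sum fun r _ => smul_le_smul_of_nonneg_left
          (le_add_of_nonneg_right (Pi.single_nonneg.2 zero_le_one)) (abs_nonneg _)
  refine ⟨v + u, u, fun s => ?_, fun s => (abs_nonneg _).trans (habs_le s), ?_, hSu, ?_⟩
  · show 0 ≤ v s + u s
    linarith [neg_abs_le (v s), habs_le s]
  · rw [mulVec_add, hv, hSu, add_zero]
  · abel

end Matrix

theorem reversible_thermodynamic_iff_no_perpetuum_mobile_general
    {X R : Type*} [Fintype R]
    (S : Matrix X R ℝ) (g : R → ℝ)
    (hrev : ∀ r : R, ∃ r' : R, ∀ x, S x r' = - S x r) :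
    (∀ v : R → ℝ, S.mulVec v = 0 → ∑ r, g r * v r = 0) ↔
      ¬ ∃ v : R → ℝ, (∀ r, 0 ≤ v r) ∧ v ≠ 0 ∧ S.mulVec v = 0 ∧
        ∑ r, g r * v r ≠ 0 := by
  refine ⟨fun h ⟨v, _, _, hv, hgv⟩ => hgv (h v hv), fun h v hv => ?_⟩
  have hK : ∀ w : R → ℝ, 0 ≤ w → S *ᵥ w = 0 → g ⬝ᵥ w = 0 := fun w hw hSw => by
    by_contra hgw
    exact h ⟨w, hw, fun hw0 => hgw (by simp [hw0]), hSw, hgw⟩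
  obtain ⟨w, u, hw, hu, hSw, hSu, rfl⟩ := exists_nonneg_sub_of_mulVec_eq_zero S hrev hv
  change g ⬝ᵥ (w - u) = 0
  rw [dotProduct_sub, hK w hw hSw, hK u hu hSu, sub_zero]

/-- A reversible RN with reaction energies is thermodynamic iff
it contains no perpetuum mobile. -/
theorem reversible_thermodynamic_iff_no_perpetuum_mobile
    {X R : Type*} [Fintype X] [Fintype R]
    (S : Matrix X R ℝ) (g : R → ℝ)
    (hrev : ∀ r : R, ∃ r' : R, ∀ x, S x r' = - S x r) :
    (∀ v : R → ℝ, S.mulVec v = 0 → ∑ r, g r * v r = 0) ↔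
      ¬ ∃ v : R → ℝ, (∀ r, 0 ≤ v r) ∧ v ≠ 0 ∧ S.mulVec v = 0 ∧
        ∑ r, g r * v r ≠ 0 :=
  reversible_thermodynamic_iff_no_perpetuum_mobile_general S g hrev
end

section
/- A mixed reaction network (X, R_rev ⊔ R_irr) is thermodynamically sound if and only if there is no futile cycle supported entirely on the irreversible reactions, i.e., there is no v > 0 with S v = 0 and supp(v) ⊆ R_irr such that v_r = 0 for all r ∈ R_rev. -/
open Matrix BigOperators

/-!
A futile cycle `v` on the irreversible reactions contradicts soundness, since `g ⬝ᵥ v` would be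
both zero and negative. Conversely, if there is no such cycle, `ker S` misses the face of the
standard simplex spanned by the irreversible reactions. Separating that compact convex face from
the closed subspace `ker S` gives a functional vanishing on `ker S` and negative at every unit
vector `e_r` with `r` irreversible; its coefficient vector is the required `g`.
-/

theorem dotProduct_neg_of_neg_on_of_support_subset {R : Type*} [Fintype R] {s : Set R}
    {g v : R → ℝ} (hg : ∀ r ∈ s, g r < 0) (hv : 0 ≤ v) (hvs : ∀ r ∉ s, v r = 0) (hv0 : v ≠ 0) :
    g ⬝ᵥ v < 0 := by
  obtain ⟨r, hr⟩ := Function.ne_iff.1 hv0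
  have hrs : r ∈ s := by_contra fun h => hr (hvs r h)
  have hterm : ∀ i, g i * v i ≤ 0 := fun i => by
    by_cases hi : i ∈ s
    · exact mul_nonpos_of_nonpos_of_nonneg (hg i hi).le (hv i)
    · simp [hvs i hi]
  calc g ⬝ᵥ v = ∑ i, g i * v i := rfl
    _ < ∑ _i : R, (0 : ℝ) :=
      Finset.sum_lt_sum (fun i _ => hterm i)
        ⟨r, Finset.mem_univ r, mul_neg_of_neg_of_pos (hg r hrs) ((hv r).lt_of_ne' hr)⟩
    _ = 0 := Finset.sum_const_zero

theorem StrongDual.exists_eq_zero_on_submodule_and_neg_on_compact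
    {E : Type*} [TopologicalSpace E] [AddCommGroup E] [IsTopologicalAddGroup E]
    [Module ℝ E] [ContinuousSMul ℝ E] [LocallyConvexSpace ℝ E]
    {K : Submodule ℝ E} (hK : IsClosed (K : Set E)) {D : Set E} (hDconv : Convex ℝ D)
    (hDcomp : IsCompact D) (hDK : Disjoint D K) :
    ∃ f : StrongDual ℝ E, (∀ w ∈ K, f w = 0) ∧ ∀ x ∈ D, f x < 0 := by
  obtain ⟨f, hfK, hfD⟩ :=
    ProperCone.hyperplane_separation ⟨K.restrictScalars NNReal, hK⟩ hDconv hDcomp hDK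
  refine ⟨f, fun w hw => le_antisymm ?_ (hfK w hw), hfD⟩
  simpa using hfK (-w) (K.neg_mem hw)

theorem exists_neg_on_and_dotProduct_eq_zero_of_no_nonneg_supported
    {R : Type*} [Fintype R] (K : Submodule ℝ (R → ℝ)) (s : Set R)
    (h : ∀ v ∈ K, 0 ≤ v → (∀ r ∉ s, v r = 0) → v = 0) :
    ∃ g : R → ℝ, (∀ r ∈ s, g r < 0) ∧ ∀ v ∈ K, g ⬝ᵥ v = 0 := by
  classical
  set D := stdSimplex ℝ R ∩ sᶜ.pi fun _ => {0}
  have hDconv : Convex ℝ D :=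
    (convex_stdSimplex ℝ R).inter (convex_pi fun _ _ => convex_singleton 0)
  have hDcomp : IsCompact D :=
    (isCompact_stdSimplex ℝ R).inter_right (isClosed_set_pi fun _ _ => isClosed_singleton)
  have hDK : Disjoint D K := by
    refine Set.disjoint_left.2 fun x ⟨⟨hx0, hx1⟩, hxs⟩ hxK => ?_
    have : x = 0 := h x hxK hx0 hxs
    simp [this] at hx1
  obtain ⟨f, hfK, hfD⟩ := StrongDual.exists_eq_zero_on_submodule_and_neg_on_compact
    (Submodule.closed_of_finiteDimensional K) hDconv hDcomp hDK
  set g := (dotProductEquiv ℝ R).symm f.toLinearMap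
  have hg : ∀ v, g ⬝ᵥ v = f v := fun v =>
    LinearMap.congr_fun ((dotProductEquiv ℝ R).apply_symm_apply f.toLinearMap) v
  refine ⟨g, fun r hr => ?_, fun v hv => (hg v).trans (hfK v hv)⟩
  have hsingle : Pi.single r 1 ∈ D := by
    refine ⟨single_mem_stdSimplex ℝ r, fun i hi => ?_⟩
    have : i ≠ r := fun h => hi (h ▸ hr)
    simp [this]
  rw [← mul_one (g r), ← dotProduct_single, hg]
  exact hfD _ hsingle

theorem mixed_sound_iff_no_irreversible_futile_cycle_general
    {X R : Type*} [Fintype R]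
    (S : Matrix X R ℝ) (Rirr : Set R) :
    (∃ g : R → ℝ, (∀ r ∈ Rirr, g r < 0) ∧
        ∀ v : R → ℝ, S.mulVec v = 0 → ∑ r, g r * v r = 0) ↔
      ¬ ∃ v : R → ℝ, (∀ r, 0 ≤ v r) ∧ v ≠ 0 ∧ S.mulVec v = 0 ∧
        ∀ r ∉ Rirr, v r = 0 := by
  constructor
  · rintro ⟨g, hg, hgS⟩ ⟨v, hv, hv0, hSv, hvs⟩
    exact (dotProduct_neg_of_neg_on_of_support_subset hg hv hvs hv0).ne (hgS v hSv)
  · intro hno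
    obtain ⟨g, hg, hgS⟩ := exists_neg_on_and_dotProduct_eq_zero_of_no_nonneg_supported
      (LinearMap.ker S.mulVecLin) Rirr fun v hSv hv hvs => by
        by_contra hv0
        exact hno ⟨v, hv, hv0, hSv, hvs⟩
    exact ⟨g, hg, hgS⟩

/-- A mixed RN is thermodynamically sound iff there is no futile
cycle supported entirely on the irreversible reactions. -/
theorem mixed_sound_iff_no_irreversible_futile_cycle
    {X R : Type*} [Fintype X] [Fintype R]
    (S : Matrix X R ℝ) (Rirr : Set R) :
    (∃ g : R → ℝ, (∀ r ∈ Rirr, g r < 0) ∧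
        ∀ v : R → ℝ, S.mulVec v = 0 → ∑ r, g r * v r = 0) ↔
      ¬ ∃ v : R → ℝ, (∀ r, 0 ≤ v r) ∧ v ≠ 0 ∧ S.mulVec v = 0 ∧
        ∀ r ∉ Rirr, v r = 0 :=
  mixed_sound_iff_no_irreversible_futile_cycle_general S Rirr
end

section
/- A reversible reaction network is free of cornucopias and abysses if and only if it is conservative, i.e., either there exists a vector v ∈ ℝ^R with S v > 0 (nonnegative nonzero), or there exists m ≫ 0 (strictly positive) with Sᵀ m = 0, but not both. -/
/-!
Reversibility lets every vector `S v` be written as `S v'` with `v' ≥ 0`: a negative flux through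
a reaction is replaced by a positive flux through its reverse. Hence the network has neither a
cornucopia nor an abyss exactly when `im S` meets the nonnegative orthant only in `0`. By Stiemke's
theorem, obtained by separating the standard simplex from `im S`, this happens exactly when some
`m ≫ 0` is orthogonal to `im S`, that is `mᵀ S = 0`.
-/

open Matrix

open scoped NNReal in
theorem Submodule.exists_pos_forall_dotProduct_eq_zero {X : Type*} [Fintype X]
    (T : Submodule ℝ (X → ℝ)) (hT : ∀ w ∈ T, 0 ≤ w → w = 0) :
    ∃ m : X → ℝ, (∀ x, 0 < m x) ∧ ∀ w ∈ T, m ⬝ᵥ w = 0 := by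
  classical
  let C : ProperCone ℝ (X → ℝ) := ⟨T.restrictScalars ℝ≥0, T.closed_of_finiteDimensional⟩
  have hdisj : Disjoint (stdSimplex ℝ X) C := by
    refine Set.disjoint_left.2 fun w ⟨hw0, hw1⟩ hwT ↦ ?_
    simp [hT w hwT hw0] at hw1
  obtain ⟨f, hfT, hfΔ⟩ :=
    C.hyperplane_separation (convex_stdSimplex ℝ X) (isCompact_stdSimplex ℝ X) hdisj
  refine ⟨fun x ↦ -f (Pi.single x 1), fun x ↦ neg_pos.2 (hfΔ _ (single_mem_stdSimplex ℝ x)), ?_⟩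
  intro w hw
  have hfw : f w = 0 := le_antisymm (by simpa using hfT (-w) (T.neg_mem hw)) (hfT w hw)
  calc (fun x ↦ -f (Pi.single x 1)) ⬝ᵥ w = -f (∑ x, w x • Pi.single x 1) := by
        simp [dotProduct, map_sum, mul_comm]
    _ = 0 := by rw [← pi_eq_sum_univ' w, hfw, neg_zero]

theorem eq_zero_of_dotProduct_eq_zero_of_pos {X : Type*} [Fintype X] {m w : X → ℝ}
    (hm : ∀ x, 0 < m x) (hw : 0 ≤ w) (h : m ⬝ᵥ w = 0) : w = 0 := by
  have := (Finset.sum_eq_zero_iff_of_nonneg fun x _ ↦ mul_nonneg (hm x).le (hw x)).1 h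
  funext x
  simpa [(hm x).ne'] using this x (Finset.mem_univ x)

namespace Matrix

variable {X R : Type*} [Fintype R]

/-- Stiemke's theorem of the alternative. -/
theorem exists_pos_vecMul_eq_zero_iff [Fintype X] (A : Matrix X R ℝ) :
    (∃ m : X → ℝ, (∀ x, 0 < m x) ∧ m ᵥ* A = 0) ↔ ∀ v, 0 ≤ A *ᵥ v → A *ᵥ v = 0 := by
  constructor
  · rintro ⟨m, hm, hmA⟩ v hv
    refine eq_zero_of_dotProduct_eq_zero_of_pos hm hv ?_
    rw [dotProduct_mulVec, hmA, zero_dotProduct]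
  · intro h
    obtain ⟨m, hm, hmA⟩ := (LinearMap.range A.mulVecLin).exists_pos_forall_dotProduct_eq_zero
      (by rintro _ ⟨v, rfl⟩; exact h v)
    refine ⟨m, hm, dotProduct_eq_zero_iff.1 fun v ↦ ?_⟩
    rw [← dotProduct_mulVec]
    exact hmA _ ⟨v, rfl⟩

theorem exists_nonneg_mulVec_eq_of_forall_neg_col (S : Matrix X R ℝ)
    (hrev : ∀ r, ∃ r', ∀ x, S x r' = -S x r) (v : R → ℝ) :
    ∃ v' : R → ℝ, 0 ≤ v' ∧ S *ᵥ v' = S *ᵥ v := by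
  classical
  choose rev hrev using hrev
  have hcol (r : R) : S *ᵥ Pi.single (rev r) 1 = -(S *ᵥ Pi.single r 1) := by
    ext x
    simp [hrev]
  refine ⟨v⁺ + ∑ r, v⁻ r • Pi.single (rev r) 1, ?_, ?_⟩
  · exact add_nonneg (posPart_nonneg v) <| Finset.sum_nonneg fun r _ ↦
      smul_nonneg (negPart_nonneg v r) (Pi.single_nonneg.2 zero_le_one)
  · calc S *ᵥ (v⁺ + ∑ r, v⁻ r • Pi.single (rev r) 1)
          = S *ᵥ v⁺ - S *ᵥ ∑ r, v⁻ r • Pi.single r 1 := by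
            simp [mulVec_add, mulVec_sum, mulVec_smul, hcol, sub_eq_add_neg]
      _ = S *ᵥ v := by rw [← pi_eq_sum_univ' v⁻, ← mulVec_sub, posPart_sub_negPart]

end Matrix

/-- A reversible RN is free of cornucopias and abysses iff it is
conservative. -/
theorem reversible_no_cornucopia_abyss_iff_conservative
    {X R : Type*} [Fintype X] [Fintype R]
    (S : Matrix X R ℝ)
    (hrev : ∀ r : R, ∃ r' : R, ∀ x, S x r' = - S x r) :
    (¬ ∃ v : R → ℝ, ((∀ r, 0 ≤ v r) ∧ v ≠ 0) ∧
        (((∀ x, 0 ≤ S.mulVec v x) ∧ S.mulVec v ≠ 0) ∨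
         ((∀ x, S.mulVec v x ≤ 0) ∧ S.mulVec v ≠ 0))) ↔
      ∃ m : X → ℝ, (∀ x, 0 < m x) ∧ Matrix.vecMul m S = 0 := by
  rw [exists_pos_vecMul_eq_zero_iff]
  constructor
  · intro h v hv
    by_contra hne
    obtain ⟨v', hv'0, hv'⟩ := S.exists_nonneg_mulVec_eq_of_forall_neg_col hrev v
    have hv'ne : v' ≠ 0 := by
      rintro rfl
      exact hne (by simpa using hv'.symm)
    exact h ⟨v', ⟨hv'0, hv'ne⟩, .inl ⟨hv'.symm ▸ hv, hv'.symm ▸ hne⟩⟩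
  · rintro h ⟨v, -, ⟨hpos, hne⟩ | ⟨hneg, hne⟩⟩
    · exact hne (h v hpos)
    · have := h (-v) (by simpa [mulVec_neg, Pi.le_def] using hneg)
      exact hne (by simpa [mulVec_neg] using this)
end

section
/- An integer vector y ∈ 𝒦(S) is minimal (no y' ∈ 𝒦(S) with y' < y componentwise) if and only if it cannot be written as y = c' y' + c'' y'' with y', y'' ∈ 𝒦(S) and c', c'' positive integers. -/
open Matrix BigOperators

/-- `MCL S y`: `y` is a moiety conservation law, i.e., a nonzero nonnegative
integer left-kernel vector of the stoichiometric matrix `S`. -/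
def MCL {X R : Type*} [Fintype X] [Fintype R] (S : Matrix X R ℤ) (y : X → ℕ) : Prop :=
  y ≠ 0 ∧ Matrix.vecMul (fun x => (y x : ℤ)) S = 0

/- A decomposition `y = c' y' + c'' y''` exhibits `y'` as a smaller law; conversely a smaller
law `y' < y` yields the decomposition `y = y' + (y - y')`, the difference being again a law
because the left kernel is closed under subtraction. -/

theorem lt_of_eq_nsmul_add_nsmul {M : Type*} [AddCommMonoid M] [PartialOrder M]
    [CanonicallyOrderedAdd M] [IsOrderedCancelAddMonoid M] {y y' y'' : M} {c' c'' : ℕ}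
    (hc' : c' ≠ 0) (hc'' : c'' ≠ 0) (hy'' : y'' ≠ 0) (h : y = c' • y' + c'' • y'') :
    y' < y :=
  calc y' ≤ c' • y' := le_self_nsmul zero_le hc'
    _ < c' • y' + c'' • y'' :=
      lt_add_of_pos_right _ ((pos_iff_ne_zero.2 hy'').trans_le (le_self_nsmul zero_le hc''))
    _ = y := h.symm

theorem vecMul_natCast_tsub {X R : Type*} [Fintype X] (S : Matrix X R ℤ) {y y' : X → ℕ}
    (hle : y' ≤ y) :
    vecMul (fun x => ((y - y') x : ℤ)) S =
      vecMul (fun x => (y x : ℤ)) S - vecMul (fun x => (y' x : ℤ)) S := by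
  rw [← sub_vecMul]
  congr 1
  funext x
  exact Nat.cast_sub (hle x)

theorem MCL.tsub {X R : Type*} [Fintype X] [Fintype R] {S : Matrix X R ℤ} {y y' : X → ℕ}
    (hy : MCL S y) (hy' : MCL S y') (hlt : y' < y) : MCL S (y - y') :=
  ⟨(tsub_pos_of_lt hlt).ne', by rw [vecMul_natCast_tsub S hlt.le, hy.2, hy'.2, sub_zero]⟩

/-- `y ∈ 𝒦(S)` is minimal iff it is not an integer combination
`y = c' y' + c'' y''` with `y', y'' ∈ 𝒦(S)` and positive integers `c', c''`. -/
theorem mcl_minimal_iff_indecomposable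
    {X R : Type*} [Fintype X] [Fintype R]
    (S : Matrix X R ℤ) (y : X → ℕ) (hy : MCL S y) :
    (¬ ∃ y' : X → ℕ, MCL S y' ∧ y' ≤ y ∧ y' ≠ y) ↔
      ¬ ∃ (y' y'' : X → ℕ) (c' c'' : ℕ), MCL S y' ∧ MCL S y'' ∧
        0 < c' ∧ 0 < c'' ∧ y = c' • y' + c'' • y'' := by
  simp only [← lt_iff_le_and_ne]
  constructor
  · rintro hmin ⟨y', y'', c', c'', hy', hy'', hc', hc'', hdecomp⟩
    exact hmin ⟨y', hy', lt_of_eq_nsmul_add_nsmul hc'.ne' hc''.ne' hy''.1 hdecomp⟩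
  · rintro hind ⟨y', hy', hlt⟩
    refine hind ⟨y', y - y', 1, 1, hy', hy.tsub hy' hlt, one_pos, one_pos, ?_⟩
    rw [one_smul, one_smul, add_tsub_cancel_of_le hlt.le]
end

section
/- A reaction network (X, R) admits a sum-formula instance if and only if it is conservative. -/
/-!
The coordinates of a real conservation law `m` span a finite-dimensional `ℚ`-subspace of `ℝ`.
Expanding them in a `ℚ`-basis `b` writes `m = ∑ⱼ bⱼ wⱼ` with rational vectors `wⱼ`, and since the
`bⱼ` are `ℚ`-linearly independent while `S` is rational, every `wⱼ` is itself a conservation law.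
Moving the coefficients `bⱼ` to nearby rationals keeps the combination strictly positive, and
clearing denominators then gives a strictly positive integer conservation law, i.e. a one-row
sum-formula instance.
-/

open Matrix

theorem Rat.exists_nat_mul_eq_natCast_of_nonneg {ι : Type*} [Fintype ι] (w : ι → ℚ)
    (hw : ∀ i, 0 ≤ w i) : ∃ N : ℕ, 0 < N ∧ ∃ z : ι → ℕ, ∀ i, (z i : ℚ) = N * w i := by
  classical
  refine ⟨∏ i, (w i).den, Finset.prod_pos fun i _ => (w i).pos,
    fun i => (∏ j ∈ Finset.univ.erase i, (w j).den) * (w i).num.toNat, fun i => ?_⟩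
  have hnum : (((w i).num.toNat : ℤ) : ℚ) = (w i).num :=
    congrArg _ (Int.toNat_of_nonneg (Rat.num_nonneg.mpr (hw i)))
  rw [← Finset.prod_erase_mul _ _ (Finset.mem_univ i), Nat.cast_mul, Nat.cast_mul, mul_assoc,
    mul_comm _ (w i), Rat.mul_den_eq_num, ← hnum]
  rfl

section

variable {X R : Type*} [Fintype X]

theorem Matrix.vecMul_map_eq_zero_iff {α β : Type*} [Ring α] [Ring β] {f : α →+* β}
    (hf : Function.Injective f) (M : Matrix X R α) (v : X → α) :
    (f ∘ v) ᵥ* M.map f = 0 ↔ v ᵥ* M = 0 := by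
  simp only [funext_iff, Pi.zero_apply, ← RingHom.map_vecMul, map_eq_zero_iff f hf]

theorem exists_pos_real_vecMul_eq_zero_of_cover {ι : Type*} [Fintype ι] {S : Matrix X R ℤ}
    (A : ι → X → ℕ) (hcover : ∀ x, ∃ a, A a x ≠ 0) (hker : ∀ a, (fun x => (A a x : ℤ)) ᵥ* S = 0) :
    ∃ m : X → ℝ, (∀ x, 0 < m x) ∧ m ᵥ* S.map (↑) = 0 := by
  refine ⟨fun x => ∑ a, (A a x : ℝ), fun x => ?_, ?_⟩
  · obtain ⟨a, ha⟩ := hcover x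
    exact Finset.sum_pos' (fun _ _ => Nat.cast_nonneg _)
      ⟨a, Finset.mem_univ a, Nat.cast_pos.mpr (Nat.pos_of_ne_zero ha)⟩
  · have hsum : (∑ a, fun x => (A a x : ℤ)) ᵥ* S = 0 := by
      rw [sum_vecMul]
      exact Finset.sum_eq_zero fun a _ => hker a
    have hcast : (fun x => ∑ a, (A a x : ℝ)) = Int.castRingHom ℝ ∘ ∑ a, fun x => (A a x : ℤ) :=
      funext fun x => by simp
    rw [hcast]
    exact (vecMul_map_eq_zero_iff Int.cast_injective _ _).mpr hsum

theorem exists_linearIndependent_rat_expansion (m : X → ℝ) :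
    ∃ (k : ℕ) (b : Fin k → ℝ) (w : Fin k → X → ℚ),
      LinearIndependent ℚ b ∧ ∀ x, m x = ∑ j, (w j x : ℝ) * b j := by
  let U := Submodule.span ℚ (Set.range m)
  have : FiniteDimensional ℚ U := FiniteDimensional.span_of_finite ℚ (Set.finite_range m)
  let B := Module.finBasis ℚ U
  have hmU (x : X) : m x ∈ U := Submodule.subset_span ⟨x, rfl⟩
  refine ⟨_, fun j => B j, fun j x => B.repr ⟨m x, hmU x⟩ j,
    B.linearIndependent.map' U.subtype U.ker_subtype, fun x => ?_⟩
  simpa only [← Rat.smul_def, Submodule.coe_sum, Submodule.coe_smul] using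
    congrArg Subtype.val (B.sum_repr ⟨m x, hmU x⟩).symm

theorem vecMul_eq_zero_of_linearIndependent {ι : Type*} [Fintype ι] {b : ι → ℝ}
    (hb : LinearIndependent ℚ b) {S : Matrix X R ℚ} {w : ι → X → ℚ}
    (h : (fun x => ∑ j, (w j x : ℝ) * b j) ᵥ* S.map (↑) = 0) (j : ι) : w j ᵥ* S = 0 := by
  funext r
  refine Fintype.linearIndependent_iff.mp hb (fun j => (w j ᵥ* S) r) ?_ j
  calc ∑ j, (w j ᵥ* S) r • b j
      = ∑ x, (∑ j, (w j x : ℝ) * b j) * (S x r : ℝ) := by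
        simp only [Rat.smul_def, vecMul, dotProduct, Rat.cast_sum, Rat.cast_mul, Finset.sum_mul]
        rw [Finset.sum_comm]
        exact Finset.sum_congr rfl fun _ _ => Finset.sum_congr rfl fun _ _ => by ring
    _ = 0 := congrFun h r

theorem exists_rat_vecMul_eq_zero_mem_of_isOpen (S : Matrix X R ℚ) {m : X → ℝ}
    (hm : m ᵥ* S.map (↑) = 0) {U : Set (X → ℝ)} (hU : IsOpen U) (hmU : m ∈ U) :
    ∃ w : X → ℚ, w ᵥ* S = 0 ∧ (fun x => (w x : ℝ)) ∈ U := by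
  obtain ⟨k, b, w, hb, hmw⟩ := exists_linearIndependent_rat_expansion m
  rw [funext hmw] at hm hmU
  have hw := vecMul_eq_zero_of_linearIndependent hb hm
  let Φ : (Fin k → ℝ) → X → ℝ := fun β x => ∑ j, (w j x : ℝ) * β j
  have hΦ : Continuous Φ := by fun_prop
  obtain ⟨q, hq⟩ := (DenseRange.piMap fun _ => Rat.denseRange_cast).exists_mem_open
    (hU.preimage hΦ) ⟨b, hmU⟩
  refine ⟨∑ j, q j • w j, ?_, ?_⟩
  · simp only [sum_vecMul, smul_vecMul, hw, smul_zero, Finset.sum_const_zero]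
  · convert hq using 2 with x
    simp [Φ, Finset.sum_apply, mul_comm]

theorem exists_pos_nat_vecMul_eq_zero_of_rat {S : Matrix X R ℤ}
    {w : X → ℚ} (hw : ∀ x, 0 < w x) (hker : w ᵥ* S.map (↑) = 0) :
    ∃ z : X → ℕ, (∀ x, 0 < z x) ∧ (fun x => (z x : ℤ)) ᵥ* S = 0 := by
  obtain ⟨N, hN, z, hz⟩ := Rat.exists_nat_mul_eq_natCast_of_nonneg w fun x => (hw x).le
  refine ⟨z, fun x => by exact_mod_cast (hz x).symm ▸ mul_pos (Nat.cast_pos.mpr hN) (hw x), ?_⟩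
  rw [← vecMul_map_eq_zero_iff (f := Int.castRingHom ℚ) Int.cast_injective]
  have hzw : (Int.castRingHom ℚ ∘ fun x => (z x : ℤ)) = (N : ℚ) • w := funext fun x => by
    simpa using hz x
  rw [hzw, smul_vecMul]
  simp [hker]

end

theorem sf_instance_iff_conservative_general
    {X R : Type*} [Fintype X]
    (S : Matrix X R ℤ) :
    (∃ (n : ℕ), 0 < n ∧ ∃ A : Fin n → X → ℕ,
        (∀ x, ∃ a, A a x ≠ 0) ∧
        (∀ a, Matrix.vecMul (fun x => (A a x : ℤ)) S = 0)) ↔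
      ∃ m : X → ℝ, (∀ x, 0 < m x) ∧
        Matrix.vecMul m (S.map (Int.cast : ℤ → ℝ)) = 0 := by
  constructor
  · rintro ⟨n, -, A, hcover, hker⟩
    exact exists_pos_real_vecMul_eq_zero_of_cover A hcover hker
  · rintro ⟨m, hmpos, hm⟩
    have hpos : IsOpen (Set.univ.pi fun _ : X => Set.Ioi (0 : ℝ)) :=
      isOpen_set_pi Set.finite_univ fun _ _ => isOpen_Ioi
    obtain ⟨w, hw, hwpos⟩ := exists_rat_vecMul_eq_zero_mem_of_isOpen (S.map (↑)) (m := m)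
      (by simpa [Matrix.map_map, Function.comp_def] using hm) hpos fun x _ => hmpos x
    obtain ⟨z, hzpos, hz⟩ := exists_pos_nat_vecMul_eq_zero_of_rat (S := S)
      (fun x => by simpa using hwpos x (Set.mem_univ x)) hw
    exact ⟨1, one_pos, fun _ => z, fun x => ⟨0, (hzpos x).ne'⟩, fun _ => hz⟩

/-- A RN admits a sum-formula instance iff it is conservative. -/
theorem sf_instance_iff_conservative
    {X R : Type*} [Fintype X] [Fintype R]
    (S : Matrix X R ℤ) :
    (∃ (n : ℕ), 0 < n ∧ ∃ A : Fin n → X → ℕ,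
        (∀ x, ∃ a, A a x ≠ 0) ∧
        (∀ a, Matrix.vecMul (fun x => (A a x : ℤ)) S = 0)) ↔
      ∃ m : X → ℝ, (∀ x, 0 < m x) ∧
        Matrix.vecMul m (S.map (Int.cast : ℤ → ℝ)) = 0 :=
  sf_instance_iff_conservative_general S
end

section
/- The relation ⇌ on species X, defined by x ⇌ y iff x = y or the network admits a net isomerization reaction kx → ky for some k ∈ ℕ, is an equivalence relation. -/
/-!
Writing `e x` for the unit vectors of `ℤ^X`, `x ⇌ y` says exactly that some positive multiple of
`e y - e x` lies in the image of `S` (for `x = y` take `v = 0`), i.e. that `e y - e x` becomes a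
torsion element in `ℤ^X ⧸ im S`. Since the torsion elements of an abelian group form a subgroup,
"differing by a torsion element" is an equivalence relation.
-/

open Matrix

theorem AddSubgroup.equivalence_exists_nsmul_sub_mem {ι G : Type*} [AddCommGroup G]
    (M : AddSubgroup G) (f : ι → G) :
    Equivalence (fun x y => ∃ k : ℕ, 0 < k ∧ k • (f y - f x) ∈ M) := by
  have iff_mem_torsion : ∀ x y, (∃ k : ℕ, 0 < k ∧ k • (f y - f x) ∈ M) ↔
      ((f y : G ⧸ M) - f x) ∈ AddCommGroup.torsion (G ⧸ M) := by
    intro x y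
    simp only [AddCommGroup.mem_torsion, isOfFinAddOrder_iff_nsmul_eq_zero,
      ← QuotientAddGroup.mk_sub, ← QuotientAddGroup.mk_nsmul, QuotientAddGroup.eq_zero_iff]
  simp only [iff_mem_torsion]
  exact ⟨fun _ => by simp, fun h => by simpa using neg_mem h,
    fun h₁ h₂ => by simpa using add_mem h₂ h₁⟩

theorem Pi.eq_single_sub_single_iff {X M : Type*} [DecidableEq X] [AddGroup M] {w : X → M}
    {x y : X} (hxy : x ≠ y) (a : M) :
    w = Pi.single y a - Pi.single x a ↔
      w x = -a ∧ w y = a ∧ ∀ z, z ≠ x → z ≠ y → w z = 0 := by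
  constructor
  · rintro rfl
    simp_all [hxy.symm]
  · rintro ⟨hx, hy, hz⟩
    funext z
    by_cases hzx : z = x
    · simp [hzx, hx, hxy]
    by_cases hzy : z = y
    · simp [hzy, hy, Ne.symm hxy]
    · simp [hzx, hzy, hz z hzx hzy]

theorem Matrix.isomerization_iff_exists_nsmul_mem_range {X R : Type*} [Fintype R] [DecidableEq X]
    (S : Matrix X R ℤ) (x y : X) :
    (x = y ∨ (x ≠ y ∧ ∃ (k : ℕ) (v : R → ℤ), 0 < k ∧
        (S *ᵥ v) x = -(k : ℤ) ∧ (S *ᵥ v) y = (k : ℤ) ∧ ∀ z, z ≠ x → z ≠ y → (S *ᵥ v) z = 0)) ↔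
      ∃ k : ℕ, 0 < k ∧
        k • (Pi.single y (1 : ℤ) - Pi.single x 1) ∈ (LinearMap.range S.mulVecLin).toAddSubgroup := by
  rcases eq_or_ne x y with rfl | hxy
  · simpa using ⟨1, one_pos⟩
  simp only [hxy, ne_eq, not_false_eq_true, true_and, false_or, Submodule.mem_toAddSubgroup,
    LinearMap.mem_range, mulVecLin_apply, smul_sub, ← Pi.single_smul,
    ← Pi.eq_single_sub_single_iff hxy, nsmul_eq_mul, mul_one, exists_and_left]

theorem obligatory_isomer_equivalence_general
    {X R : Type*} [Fintype R]
    (S : Matrix X R ℤ) :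
    Equivalence (fun x y : X => x = y ∨
      (x ≠ y ∧ ∃ (k : ℕ) (v : R → ℤ), 0 < k ∧
        S.mulVec v x = -(k : ℤ) ∧ S.mulVec v y = (k : ℤ) ∧
        ∀ z, z ≠ x → z ≠ y → S.mulVec v z = 0)) := by
  classical
  simp only [S.isomerization_iff_exists_nsmul_mem_range]
  exact AddSubgroup.equivalence_exists_nsmul_sub_mem _ _

/-- The relation `x ⇌ y` (`x = y` or the network admits a net
isomerization reaction `k x → k y`) is an equivalence relation. -/
theorem obligatory_isomer_equivalence
    {X R : Type*} [Fintype X] [Fintype R] [DecidableEq X]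
    (S : Matrix X R ℤ) :
    Equivalence (fun x y : X => x = y ∨
      (x ≠ y ∧ ∃ (k : ℕ) (v : R → ℤ), 0 < k ∧
        S.mulVec v x = -(k : ℤ) ∧ S.mulVec v y = (k : ℤ) ∧
        ∀ z, z ≠ x → z ≠ y → S.mulVec v z = 0)) :=
  obligatory_isomer_equivalence_general S
end

section
/- For species x, y of a reaction network with stoichiometric matrix S, x ⇌ y (x = y or x and y are obligatory isomers) holds if and only if m_x = m_y for every m ∈ ker Sᵀ. -/
open Matrix

/-! Pairing `S v` with `m ∈ ker Sᵀ` gives `mᵀ S v = 0`, so `S v = k (e_y - e_x)` forces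
`k (m_y - m_x) = 0`. Conversely, if `e_y - e_x` is orthogonal to `ker Sᵀ` (already over `ℚ`,
since rational kernel vectors are real ones), it lies in the image of `S` over `ℚ`, and clearing
the denominators of a rational preimage yields an integer one with a positive multiplier `k`. -/

theorem Matrix.exists_mulVec_eq_of_forall_vecMul_eq_zero {K m n : Type*} [Field K] [Fintype m]
    [Fintype n] (A : Matrix m n K) (w : m → K) (h : ∀ u : m → K, u ᵥ* A = 0 → u ⬝ᵥ w = 0) :
    ∃ v, A *ᵥ v = w := by
  classical
  by_contra! hw
  obtain ⟨f, hfw, hrange⟩ := Submodule.exists_le_ker_of_notMem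
    (p := LinearMap.range A.mulVecLin) (v := w) (by rintro ⟨v, rfl⟩; exact hw v rfl)
  set u := (dotProductEquiv K m).symm f
  have hf : ∀ z, f z = u ⬝ᵥ z := fun z => by
    rw [← dotProductEquiv_apply_apply, LinearEquiv.apply_symm_apply]
  have hu : u ᵥ* A = 0 := by
    ext r
    have : f (A *ᵥ Pi.single r 1) = 0 := hrange ⟨Pi.single r 1, rfl⟩
    rwa [hf, dotProduct_mulVec, dotProduct_single, mul_one] at this
  exact hfw (by rw [hf]; exact h u hu)

theorem Matrix.exists_mulVec_eq_natCast_smul_of_map_mulVec_eq {m n : Type*} [Fintype n]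
    (S : Matrix m n ℤ) (w : m → ℤ) (v : n → ℚ) (hv : S.map (Int.cast : ℤ → ℚ) *ᵥ v = (↑) ∘ w) :
    ∃ k : ℕ, 0 < k ∧ ∃ u : n → ℤ, S *ᵥ u = (k : ℤ) • w := by
  obtain ⟨⟨b, hb⟩, hc⟩ := IsLocalization.exist_integer_multiples_of_finite (nonZeroDivisors ℤ) v
  choose c hc using hc
  have hSc : S *ᵥ c = b • w := by
    have hc' : (Int.castRingHom ℚ) ∘ c = (b : ℚ) • v := by
      funext r; simpa [Algebra.smul_def] using hc r
    funext i
    apply Int.cast_injective (α := ℚ)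
    rw [← eq_intCast (Int.castRingHom ℚ), RingHom.map_mulVec, hc', Int.coe_castRingHom,
      mulVec_smul, hv]
    simp
  -- `b` may be negative; scaling by it twice makes the multiplier positive
  refine ⟨b.natAbs * b.natAbs, ?_, b • c, ?_⟩
  · simpa [Nat.pos_iff_ne_zero] using nonZeroDivisors.ne_zero hb
  · rw [mulVec_smul, hSc, smul_smul, Int.natAbs_mul_self]

theorem Pi.eq_smul_single_sub_single_iff {ι M : Type*} [DecidableEq ι] [Ring M] {x y : ι}
    (hxy : x ≠ y) (u : ι → M) (c : M) :
    u = c • (Pi.single y 1 - Pi.single x 1) ↔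
      u x = -c ∧ u y = c ∧ ∀ z, z ≠ x → z ≠ y → u z = 0 := by
  constructor
  · rintro rfl
    refine ⟨?_, ?_, fun z hzx hzy => ?_⟩ <;> simp [*, hxy.symm]
  · rintro ⟨hx, hy, hz⟩
    funext z
    by_cases hzx : z = x
    · subst hzx; simp [hx, hxy]
    by_cases hzy : z = y
    · subst hzy; simp [hy, hzx]
    simp [hz z hzx hzy, hzx, hzy]

theorem Matrix.dotProduct_intCast_mulVec_eq_zero {m n K : Type*} [Fintype m] [Fintype n]
    [CommRing K] (S : Matrix m n ℤ) (v : n → ℤ) {u : m → K} (hu : u ᵥ* S.map Int.cast = 0) :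
    u ⬝ᵥ (Int.cast ∘ (S *ᵥ v)) = 0 := by
  have hcast : Int.cast ∘ (S *ᵥ v) = S.map (Int.cast : ℤ → K) *ᵥ (Int.cast ∘ v) :=
    funext (RingHom.map_mulVec (Int.castRingHom K) S v)
  rw [hcast, dotProduct_mulVec, hu, zero_dotProduct]

theorem Matrix.ratCast_comp_vecMul_map_intCast_eq_zero {m n : Type*} [Fintype m]
    (S : Matrix m n ℤ) {u : m → ℚ} (hu : u ᵥ* S.map (Int.cast : ℤ → ℚ) = 0) :
    (Rat.cast ∘ u : m → ℝ) ᵥ* S.map Int.cast = 0 := by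
  have hS : (S.map (Int.cast : ℤ → ℚ)).map (Rat.castHom ℝ) = S.map Int.cast := by
    ext; simp
  funext r
  rw [← hS, Pi.zero_apply, ← Rat.coe_castHom, ← RingHom.map_vecMul, hu, Pi.zero_apply, map_zero]

theorem Pi.intCast_comp_smul_single_sub_single {ι K : Type*} [DecidableEq ι] [Ring K] (k : ℤ)
    (x y : ι) :
    (Int.cast ∘ (k • (Pi.single y 1 - Pi.single x 1)) : ι → K) =
      (k : K) • (Pi.single y 1 - Pi.single x 1) := by
  funext z
  simp [Pi.single_apply]

theorem Matrix.dotProduct_smul_single_sub_single {ι K : Type*} [Fintype ι] [DecidableEq ι]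
    [CommRing K] (m : ι → K) (c : K) (x y : ι) :
    m ⬝ᵥ (c • (Pi.single y 1 - Pi.single x 1)) = c * (m y - m x) := by
  rw [dotProduct_smul, dotProduct_sub, dotProduct_single, dotProduct_single, smul_eq_mul,
    mul_one, mul_one]

/-- `x ⇌ y` holds iff `m x = m y` for every `m ∈ ker Sᵀ`. -/
theorem obligatory_isomer_iff_kernel
    {X R : Type*} [Fintype X] [Fintype R] [DecidableEq X]
    (S : Matrix X R ℤ) (x y : X) :
    (x = y ∨
      (x ≠ y ∧ ∃ (k : ℕ) (v : R → ℤ), 0 < k ∧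
        S.mulVec v x = -(k : ℤ) ∧ S.mulVec v y = (k : ℤ) ∧
        ∀ z, z ≠ x → z ≠ y → S.mulVec v z = 0)) ↔
      ∀ m : X → ℝ, Matrix.vecMul m (S.map (Int.cast : ℤ → ℝ)) = 0 →
        m x = m y := by
  by_cases hxy : x = y
  · simp [hxy]
  simp only [hxy, false_or, Ne, not_false_eq_true, true_and]
  simp_rw [← Pi.eq_smul_single_sub_single_iff hxy]
  constructor
  · rintro ⟨k, v, hk, hv⟩ m hm
    have hkm : ((k : ℤ) : ℝ) * (m y - m x) = 0 := by
      rw [← dotProduct_smul_single_sub_single, ← Pi.intCast_comp_smul_single_sub_single, ← hv]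
      exact S.dotProduct_intCast_mulVec_eq_zero v hm
    simpa [hk.ne', sub_eq_zero, eq_comm] using hkm
  · intro h
    obtain ⟨v, hv⟩ := (S.map (Int.cast : ℤ → ℚ)).exists_mulVec_eq_of_forall_vecMul_eq_zero
      (Int.cast ∘ ((1 : ℤ) • (Pi.single y 1 - Pi.single x 1))) fun u hu => by
        have huxy : u x = u y := by
          simpa using h _ (S.ratCast_comp_vecMul_map_intCast_eq_zero hu)
        rw [Pi.intCast_comp_smul_single_sub_single, dotProduct_smul_single_sub_single, huxy,
          sub_self, mul_zero]
    obtain ⟨k, hk, u, hu⟩ := S.exists_mulVec_eq_natCast_smul_of_map_mulVec_eq _ v hv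
    exact ⟨k, u, hk, by rwa [smul_smul, mul_one] at hu⟩
end

section
/- If the rows of the minimal-moiety representation M of a conservative reaction network are the minimal elements of 𝒦(S), then im Mᵀ = ker Sᵀ and hence the number of minimal moiety conservation laws is at least dim ker Sᵀ. -/
open Matrix BigOperators

/-- A minimal moiety conservation law. -/
def MCLmin {X R : Type*} [Fintype X] [Fintype R] (S : Matrix X R ℤ) (y : X → ℕ) : Prop :=
  MCL S y ∧ ¬ ∃ y' : X → ℕ, MCL S y' ∧ y' ≤ y ∧ y' ≠ y

/-!
Every natural vector in the left kernel of `S` is a sum of minimal ones, by descent along the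
pointwise order, so it lies in the real span of the rows of `M`. A conservative network has a
strictly positive integer kernel vector `g`: the real kernel is spanned by rational kernel
vectors, and a rational point close enough to the positive vector `m` is still positive. Any
integer kernel vector `w` is then `u - N • g` with `u` natural, and any rational one is an integer
one divided by a positive integer. Finally, the real kernel is spanned by the rational one, since
the rank of a matrix cannot drop under a field extension.
-/

open Module Submodule

theorem finrank_span_le_finrank_span_image_algebraMap {K L n : Type*} [Field K] [Field L]
    [Algebra K L] [Finite n] (s : Set (n → K)) :
    finrank K (span K s) ≤ finrank L (span L (Pi.algebraMap n K L '' s)) := by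
  have hli : LinearIndependent K (fun i => (finBasis K (span K s) i : n → K)) :=
    (finBasis K (span K s)).linearIndependent.map' (span K s).subtype (span K s).ker_subtype
  have hmem (i) : Pi.algebraMap n K L (finBasis K (span K s) i) ∈
      span L (Pi.algebraMap n K L '' s) := by
    apply span_le_restrictScalars K L
    rw [← map_span]
    exact mem_map_of_mem (finBasis K (span K s) i).2
  calc finrank K (span K s) = Fintype.card (Fin (finrank K (span K s))) := by simp
    _ = finrank L (span L (Set.range fun i => Pi.algebraMap n K L (finBasis K (span K s) i))) :=
      (finrank_span_eq_card ((linearIndependent_algebraMap_comp_iff (S := L)).mpr hli)).symm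
    _ ≤ _ := finrank_mono (span_le.mpr (Set.range_subset_iff.mpr hmem))

namespace Matrix

variable {K L m n : Type*} [Field K] [Field L] [Algebra K L] [Fintype m] [Finite n]

theorem finrank_range_vecMulLinear_le_map (A : Matrix m n K) :
    finrank K (LinearMap.range A.vecMulLinear) ≤
      finrank L (LinearMap.range (A.map (algebraMap K L)).vecMulLinear) := by
  have hrows : Set.range (A.map (algebraMap K L)).row = Pi.algebraMap n K L '' Set.range A.row := by
    rw [← Set.range_comp]
    rfl
  rw [range_vecMulLinear, range_vecMulLinear, hrows]
  exact finrank_span_le_finrank_span_image_algebraMap _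

theorem ker_vecMulLinear_map_algebraMap (A : Matrix m n K) :
    LinearMap.ker (A.map (algebraMap K L)).vecMulLinear =
      span L (Pi.algebraMap m K L '' LinearMap.ker A.vecMulLinear) := by
  symm
  refine eq_of_le_of_finrank_le ?_ ?_
  · rw [span_le]
    rintro - ⟨v, hv, rfl⟩
    rw [SetLike.mem_coe, LinearMap.mem_ker, vecMulLinear_apply] at hv ⊢
    ext j
    have h := RingHom.map_vecMul (algebraMap K L) A v j
    rw [hv, Pi.zero_apply, map_zero] at h
    exact h.symm
  · have hK := A.vecMulLinear.finrank_range_add_finrank_ker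
    have hL := (A.map (algebraMap K L)).vecMulLinear.finrank_range_add_finrank_ker
    have hrange := finrank_range_vecMulLinear_le_map (L := L) A
    have hker := finrank_span_le_finrank_span_image_algebraMap (L := L)
      (LinearMap.ker A.vecMulLinear : Set (m → K))
    rw [span_eq] at hker
    rw [finrank_fintype_fun_eq_card] at hK hL
    omega

end Matrix

theorem span_image_ratCast_subset_closure {ι : Type*} (s : Set (ι → ℚ)) :
    (span ℝ (Pi.algebraMap ι ℚ ℝ '' s) : Set (ι → ℝ)) ⊆
      closure (Pi.algebraMap ι ℚ ℝ '' span ℚ s) := by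
  intro u hu
  obtain ⟨n, c, g, rfl⟩ := mem_span_set'.mp hu
  choose a has hag using fun i => (g i).2
  let φ : (Fin n → ℝ) → (ι → ℝ) := fun e => ∑ i, e i • Pi.algebraMap ι ℚ ℝ (a i)
  have hc : c ∈ closure (Set.range (Pi.map fun _ (q : ℚ) => (q : ℝ))) :=
    (DenseRange.piMap fun _ => Rat.denseRange_cast (𝕜 := ℝ)).closure_eq ▸ Set.mem_univ c
  have hφc : φ c = ∑ i, c i • (g i : ι → ℝ) := by simp only [φ, hag]
  rw [← hφc]
  refine map_mem_closure (by fun_prop) hc ?_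
  rintro - ⟨q, rfl⟩
  refine ⟨∑ i, q i • a i, sum_mem fun i _ => smul_mem _ _ (subset_span (has i)), ?_⟩
  simp [φ, map_sum, Rat.cast_smul_eq_qsmul]

theorem exists_pos_nat_mul_eq_intCast {ι : Type*} [Fintype ι] (v : ι → ℚ) :
    ∃ d : ℕ, 0 < d ∧ ∃ w : ι → ℤ, ∀ i, (w i : ℚ) = d * v i := by
  refine ⟨∏ i, (v i).den, Finset.prod_pos fun i _ => (v i).pos, ?_⟩
  have (i : ι) : ∃ z : ℤ, (z : ℚ) = (∏ j, (v j).den : ℕ) * v i := by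
    obtain ⟨k, hk⟩ := Finset.dvd_prod_of_mem (fun j => (v j).den) (Finset.mem_univ i)
    refine ⟨(v i).num * k, ?_⟩
    rw [hk]
    push_cast
    rw [← Rat.mul_den_eq_num]
    ring
  choose w hw using this
  exact ⟨w, hw⟩

theorem map_intCast_real_eq_map_algebraMap {X R : Type*} (S : Matrix X R ℤ) :
    S.map (Int.cast : ℤ → ℝ) = (S.map (Int.cast : ℤ → ℚ)).map (algebraMap ℚ ℝ) := by
  ext; simp

section Kernel

variable {X R : Type*} [Fintype X] (S : Matrix X R ℤ)

theorem vecMul_map_intCast_eq_zero_iff {K : Type*} [Ring K] [CharZero K] (w : X → ℤ) :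
    (fun x => (w x : K)) ᵥ* S.map Int.cast = 0 ↔ w ᵥ* S = 0 := by
  simp only [funext_iff, Pi.zero_apply]
  refine forall_congr' fun j => ?_
  rw [← Int.cast_eq_zero (α := K), ← eq_intCast (Int.castRingHom K), RingHom.map_vecMul]
  rfl

theorem exists_int_vecMul_eq_zero_of_rat {v : X → ℚ} (hv : v ᵥ* S.map Int.cast = 0) :
    ∃ d : ℕ, 0 < d ∧ ∃ w : X → ℤ, w ᵥ* S = 0 ∧ ∀ x, (w x : ℚ) = d * v x := by
  obtain ⟨d, hd, w, hw⟩ := exists_pos_nat_mul_eq_intCast v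
  refine ⟨d, hd, w, (vecMul_map_intCast_eq_zero_iff S w (K := ℚ)).mp ?_, hw⟩
  have : (fun x => (w x : ℚ)) = (d : ℚ) • v := funext hw
  rw [this, smul_vecMul, hv, smul_zero]

variable {𝓜 : Type*} (M : 𝓜 → X → ℕ)

theorem span_natCast_le_ker_vecMulLinear (hM : ∀ i, (fun x => (M i x : ℤ)) ᵥ* S = 0) :
    span ℝ (Set.range fun i x => (M i x : ℝ)) ≤
      LinearMap.ker (S.map (Int.cast : ℤ → ℝ)).vecMulLinear := by
  rw [span_le]
  rintro - ⟨i, rfl⟩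
  simpa using (vecMul_map_intCast_eq_zero_iff S (fun x => (M i x : ℤ)) (K := ℝ)).mpr (hM i)

variable [Fintype R]

theorem exists_pos_natCast_vecMul_eq_zero {m : X → ℝ} (hmpos : ∀ x, 0 < m x)
    (hm : m ᵥ* S.map Int.cast = 0) :
    ∃ g : X → ℕ, (∀ x, 0 < g x) ∧ (fun x => (g x : ℤ)) ᵥ* S = 0 := by
  have hm' : m ∈ span ℝ (Pi.algebraMap X ℚ ℝ ''
      LinearMap.ker (S.map (Int.cast : ℤ → ℚ)).vecMulLinear) := by
    rw [← ker_vecMulLinear_map_algebraMap, ← map_intCast_real_eq_map_algebraMap]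
    exact hm
  have hopen : IsOpen {u : X → ℝ | ∀ x, 0 < u x} := by
    simpa only [Set.pi, Set.mem_univ, Set.mem_Ioi, true_implies] using
      isOpen_set_pi Set.finite_univ fun (x : X) _ => isOpen_Ioi (a := (0 : ℝ))
  obtain ⟨_, hvpos, v, hv, rfl⟩ := mem_closure_iff.mp (span_image_ratCast_subset_closure _ hm')
    _ hopen hmpos
  rw [span_eq, SetLike.mem_coe, LinearMap.mem_ker, vecMulLinear_apply] at hv
  obtain ⟨d, hd, w, hw, hwv⟩ := exists_int_vecMul_eq_zero_of_rat S hv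
  have hwpos (x : X) : 0 < w x := by
    have : (0 : ℚ) < w x := by
      rw [hwv]
      exact mul_pos (by exact_mod_cast hd) (Rat.cast_pos.mp (hvpos x))
    exact_mod_cast this
  refine ⟨fun x => (w x).toNat, fun x => Int.lt_toNat.mpr (hwpos x), ?_⟩
  convert hw with x
  exact Int.toNat_of_nonneg (hwpos x).le

theorem mem_closure_setOf_MCLmin {y : X → ℕ} (hy : (fun x => (y x : ℤ)) ᵥ* S = 0) :
    y ∈ AddSubmonoid.closure {y | MCLmin S y} := by
  induction y using WellFoundedLT.induction with
  | _ y ih =>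
  by_cases hy0 : y = 0
  · exact hy0 ▸ zero_mem _
  by_cases hmin : MCLmin S y
  · exact AddSubmonoid.subset_closure hmin
  obtain ⟨z, ⟨hz0, hz⟩, hzy, hne⟩ : ∃ z, MCL S z ∧ z ≤ y ∧ z ≠ y := by
    by_contra h
    exact hmin ⟨⟨hy0, hy⟩, h⟩
  have hsub : (fun x => ((y - z) x : ℤ)) ᵥ* S = 0 := by
    have : (fun x => ((y - z) x : ℤ)) = (fun x => (y x : ℤ)) - fun x => (z x : ℤ) := by
      ext x
      simp [Nat.cast_sub (hzy x)]
    rw [this, sub_vecMul, hy, hz, sub_zero]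
  have hlt : y - z < y := by
    refine lt_of_le_of_ne tsub_le_self fun h => hz0 ?_
    rw [← tsub_tsub_cancel_of_le hzy, h, tsub_self]
  rw [← add_tsub_cancel_of_le hzy]
  exact add_mem (ih z (lt_of_le_of_ne hzy hne) hz) (ih (y - z) hlt hsub)

theorem natCast_mem_span_of_vecMul_eq_zero (hall : ∀ y : X → ℕ, MCLmin S y → ∃ i, M i = y)
    {y : X → ℕ} (hy : (fun x => (y x : ℤ)) ᵥ* S = 0) :
    (fun x => (y x : ℝ)) ∈ span ℝ (Set.range fun i x => (M i x : ℝ)) := by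
  have hle : AddSubmonoid.closure {y | MCLmin S y} ≤
      (span ℝ (Set.range fun i x => (M i x : ℝ))).toAddSubmonoid.comap
        ((Nat.castAddMonoidHom ℝ).compLeft X) := by
    rw [AddSubmonoid.closure_le]
    intro y hy
    obtain ⟨i, rfl⟩ := hall y hy
    exact subset_span ⟨i, rfl⟩
  exact hle (mem_closure_setOf_MCLmin S hy)

theorem intCast_mem_span_of_vecMul_eq_zero (hall : ∀ y : X → ℕ, MCLmin S y → ∃ i, M i = y)
    {g : X → ℕ} (hgpos : ∀ x, 0 < g x) (hg : (fun x => (g x : ℤ)) ᵥ* S = 0)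
    {w : X → ℤ} (hw : w ᵥ* S = 0) :
    (fun x => (w x : ℝ)) ∈ span ℝ (Set.range fun i x => (M i x : ℝ)) := by
  set N : ℕ := ∑ x, (w x).natAbs
  have hnonneg (x : X) : 0 ≤ w x + N * g x := by
    have h1 : (w x).natAbs ≤ N :=
      Finset.single_le_sum (f := fun x => (w x).natAbs) (fun _ _ => Nat.zero_le _)
        (Finset.mem_univ x)
    have h2 : N ≤ N * g x := Nat.le_mul_of_pos_right N (hgpos x)
    omega
  set u : X → ℕ := fun x => (w x + N * g x).toNat
  have hu (x : X) : (u x : ℤ) = w x + N * g x := Int.toNat_of_nonneg (hnonneg x)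
  have huker : (fun x => (u x : ℤ)) ᵥ* S = 0 := by
    have : (fun x => (u x : ℤ)) = w + (N : ℤ) • fun x => (g x : ℤ) := by
      ext x
      simp [hu]
    rw [this, add_vecMul, smul_vecMul, hw, hg, smul_zero, add_zero]
  have hw_eq : (fun x => (w x : ℝ)) = (fun x => (u x : ℝ)) - (N : ℝ) • fun x => (g x : ℝ) := by
    ext x
    have := congr_arg (Int.cast : ℤ → ℝ) (hu x)
    push_cast at this
    simp only [Pi.sub_apply, Pi.smul_apply, smul_eq_mul]
    linarith
  rw [hw_eq]
  exact sub_mem (natCast_mem_span_of_vecMul_eq_zero S M hall huker)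
    (smul_mem _ _ (natCast_mem_span_of_vecMul_eq_zero S M hall hg))

theorem ker_vecMulLinear_le_span_of_MCLmin (hcons : ∃ m : X → ℝ, (∀ x, 0 < m x) ∧
      Matrix.vecMul m (S.map (Int.cast : ℤ → ℝ)) = 0)
    (hall : ∀ y : X → ℕ, MCLmin S y → ∃ i, M i = y) :
    LinearMap.ker (S.map (Int.cast : ℤ → ℝ)).vecMulLinear ≤
      span ℝ (Set.range fun i x => (M i x : ℝ)) := by
  obtain ⟨m, hmpos, hm⟩ := hcons
  obtain ⟨g, hgpos, hg⟩ := exists_pos_natCast_vecMul_eq_zero S hmpos hm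
  rw [map_intCast_real_eq_map_algebraMap, ker_vecMulLinear_map_algebraMap, span_le]
  rintro - ⟨v, hv, rfl⟩
  rw [SetLike.mem_coe, LinearMap.mem_ker, vecMulLinear_apply] at hv
  obtain ⟨d, hd, w, hw, hwv⟩ := exists_int_vecMul_eq_zero_of_rat S hv
  have hv_eq : Pi.algebraMap X ℚ ℝ v = (d : ℝ)⁻¹ • fun x => (w x : ℝ) := by
    ext x
    have := congr_arg (Rat.cast : ℚ → ℝ) (hwv x)
    push_cast at this
    simp only [Pi.smul_apply, smul_eq_mul, this]
    field_simp
    rfl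
  rw [hv_eq]
  exact smul_mem _ _ (intCast_mem_span_of_vecMul_eq_zero S M hall hgpos hg hw)

end Kernel

theorem mm_representation_spans_left_kernel_general
    {X R 𝓜 : Type*} [Fintype X] [Fintype R] [Fintype 𝓜]
    (S : Matrix X R ℤ)
    (hcons : ∃ m : X → ℝ, (∀ x, 0 < m x) ∧
      Matrix.vecMul m (S.map (Int.cast : ℤ → ℝ)) = 0)
    (M : 𝓜 → X → ℕ)
    (hmin : ∀ i, MCLmin S (M i))
    (hall : ∀ y : X → ℕ, MCLmin S y → ∃ i, M i = y) :
    (∀ m : X → ℝ,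
      Matrix.vecMul m (S.map (Int.cast : ℤ → ℝ)) = 0 ↔
        ∃ c : 𝓜 → ℝ, m = fun x => ∑ i, c i * (M i x : ℝ)) ∧
    Module.finrank ℝ
        (LinearMap.ker (Matrix.vecMulLinear (S.map (Int.cast : ℤ → ℝ)))) ≤
      Fintype.card 𝓜 := by
  have hker : LinearMap.ker (S.map (Int.cast : ℤ → ℝ)).vecMulLinear =
      span ℝ (Set.range fun i x => (M i x : ℝ)) :=
    le_antisymm (ker_vecMulLinear_le_span_of_MCLmin S M hcons hall)
      (span_natCast_le_ker_vecMulLinear S M fun i => (hmin i).1.2)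
  refine ⟨fun m => ?_, hker ▸ finrank_range_le_card _⟩
  rw [← vecMulLinear_apply, ← LinearMap.mem_ker, hker, mem_span_range_iff_exists_fun]
  simp only [funext_iff, Finset.sum_apply, Pi.smul_apply, smul_eq_mul, eq_comm]

/-- If the rows of the minimal-moiety representation `M` of a
conservative RN are exactly the minimal elements of `𝒦(S)`, then
`im Mᵀ = ker Sᵀ` and the number of minimal MCLs is at least `dim ker Sᵀ`. -/
theorem mm_representation_spans_left_kernel
    {X R 𝓜 : Type*} [Fintype X] [Fintype R] [Fintype 𝓜]
    (S : Matrix X R ℤ)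
    (hcons : ∃ m : X → ℝ, (∀ x, 0 < m x) ∧
      Matrix.vecMul m (S.map (Int.cast : ℤ → ℝ)) = 0)
    (M : 𝓜 → X → ℕ)
    (hmin : ∀ i, MCLmin S (M i))
    (hall : ∀ y : X → ℕ, MCLmin S y → ∃ i, M i = y)
    (hinj : Function.Injective M) :
    (∀ m : X → ℝ,
      Matrix.vecMul m (S.map (Int.cast : ℤ → ℝ)) = 0 ↔
        ∃ c : 𝓜 → ℝ, m = fun x => ∑ i, c i * (M i x : ℝ)) ∧
    Module.finrank ℝ
        (LinearMap.ker (Matrix.vecMulLinear (S.map (Int.cast : ℤ → ℝ)))) ≤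
      Fintype.card 𝓜 :=
  mm_representation_spans_left_kernel_general S hcons M hmin hall
end
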